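/- arXiv:2501.19148 — 7 statements merged into one kernel-verified Lean document; each statement's English description precedes it below -/
import Mathlib

section
/- Let v ∈ ℝ_{≥0}^n, ε ≥ 0, and ρ ∈ ℝ_{≥0} satisfy v↓_ℓ ≤ ρ ≤ (1+ε)·v↓_ℓ, where v↓ is v sorted nonincreasingly. Then ℓ·ρ + ∑_{i=1}^n (v_i − ρ)^+ ≤ (1+ε)·Top_ℓ(v). -/
open Finset

/-- `Topl ℓ v` : the sum of the `ℓ` largest entries of `v`, expressed as the
maximum subset-sum over subsets of cardinality `ℓ` (these agree for `ℓ ≤ n`). -/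
noncomputable def Topl {ι : Type*} [Fintype ι] (ℓ : ℕ) (v : ι → ℝ) : ℝ :=
  sSup {x : ℝ | ∃ S : Finset ι, S.card = ℓ ∧ x = ∑ i ∈ S, v i}

/-- `nthLargest ℓ v` : the `ℓ`-th largest coordinate of `v` (1-indexed), i.e. the
largest threshold `t` such that at least `ℓ` coordinates are `≥ t`. -/
noncomputable def nthLargest {ι : Type*} [Fintype ι] (ℓ : ℕ) (v : ι → ℝ) : ℝ :=
  sSup {t : ℝ | ℓ ≤ {i | t ≤ v i}.ncard}

/-!
Let `λ = v↓_ℓ`. At most `ℓ` coordinates exceed `ρ ≥ λ` and at least `ℓ` are `≥ λ`, so some set `S`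
of exactly `ℓ` coordinates, all `≥ λ`, contains every coordinate exceeding `ρ`. Then
`ℓ ρ + ∑ (v_i - ρ)⁺ = ∑_{i ∈ S} (ρ + (v_i - ρ)⁺)`, and each summand is at most `(1 + ε) v_i`: it is
either `ρ ≤ (1 + ε) λ ≤ (1 + ε) v_i`, or `v_i` with `ε v_i ≥ ε λ ≥ ρ - λ ≥ 0`. Summing over `S`
gives at most `(1 + ε) Top_ℓ(v)`.
-/

section
variable {ι : Type*} [Fintype ι] {ℓ : ℕ} {v : ι → ℝ}

theorem sum_le_Topl {S : Finset ι} (hS : #S = ℓ) : ∑ i ∈ S, v i ≤ Topl ℓ v := by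
  refine le_csSup ?_ ⟨S, hS, rfl⟩
  refine (Set.finite_range fun S : Finset ι => ∑ i ∈ S, v i).bddAbove.mono ?_
  rintro x ⟨S, -, rfl⟩
  exact ⟨S, rfl⟩

theorem mem_nthLargest_set_iff {t : ℝ} :
    t ∈ {t : ℝ | ℓ ≤ {i | t ≤ v i}.ncard} ↔ ℓ ≤ #{i | t ≤ v i} := by
  rw [Set.mem_ofPred_eq, Set.ncard_eq_toFinset_card', Set.toFinset_ofPred]

theorem bddAbove_nthLargest_set (hℓ : 1 ≤ ℓ) : BddAbove {t : ℝ | ℓ ≤ {i | t ≤ v i}.ncard} := by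
  refine ⟨⨆ i, v i, fun t ht => ?_⟩
  obtain ⟨i, hi⟩ := card_pos.mp (hℓ.trans (mem_nthLargest_set_iff.mp ht))
  exact (mem_filter.mp hi).2.trans (le_ciSup (Set.finite_range v).bddAbove i)

theorem nonempty_nthLargest_set (hℓ : ℓ ≤ Fintype.card ι) :
    {t : ℝ | ℓ ≤ {i | t ≤ v i}.ncard}.Nonempty := by
  refine ⟨⨅ i, v i, mem_nthLargest_set_iff.mpr ?_⟩
  rwa [filter_true_of_mem fun i _ => ciInf_le (Set.finite_range v).bddBelow i, card_univ]

theorem le_nthLargest (hℓ : 1 ≤ ℓ) {t : ℝ} (ht : ℓ ≤ #{i | t ≤ v i}) : t ≤ nthLargest ℓ v :=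
  le_csSup (bddAbove_nthLargest_set hℓ) (mem_nthLargest_set_iff.mpr ht)

theorem le_card_filter_nthLargest_le (hℓn : ℓ ≤ Fintype.card ι) :
    ℓ ≤ #{i | nthLargest ℓ v ≤ v i} := by
  set lam := nthLargest ℓ v
  rcases ({i | v i < lam} : Finset ι).eq_empty_or_nonempty with hL | hL
  · rwa [filter_true_of_mem fun i _ => not_lt.mp (filter_eq_empty_iff.mp hL (mem_univ i)),
      card_univ]
  have hm : ({i | v i < lam} : Finset ι).sup' hL v < lam :=
    (sup'_lt_iff hL).mpr fun i hi => (mem_filter.mp hi).2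
  -- an admissible threshold `t` above every coordinate below `lam` counts no more than `lam` does
  obtain ⟨t, ht, hmt⟩ := exists_lt_of_lt_csSup (nonempty_nthLargest_set hℓn) hm
  refine (mem_nthLargest_set_iff.mp ht).trans
    (card_le_card fun i hi => mem_filter.mpr ⟨mem_univ i, ?_⟩)
  by_contra! hlt
  exact hmt.not_ge (((mem_filter.mp hi).2).trans (le_sup' v (mem_filter.mpr ⟨mem_univ i, hlt⟩)))

theorem card_filter_nthLargest_lt_lt (hℓ : 1 ≤ ℓ) : #{i | nthLargest ℓ v < v i} < ℓ := by
  by_contra! h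
  have hne : ({i | nthLargest ℓ v < v i} : Finset ι).Nonempty := card_pos.mp (hℓ.trans h)
  have hle : ({i | nthLargest ℓ v < v i} : Finset ι).inf' hne v ≤ nthLargest ℓ v := by
    refine le_nthLargest hℓ (h.trans (card_le_card fun i hi => ?_))
    exact mem_filter.mpr ⟨mem_univ i, inf'_le v hi⟩
  exact hle.not_gt ((lt_inf'_iff hne).mpr fun i hi => (mem_filter.mp hi).2)

theorem sum_max_sub_eq_sum_of_subset [DecidableEq ι] {ρ : ℝ} {S : Finset ι}
    (hS : ({i | ρ < v i} : Finset ι) ⊆ S) :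
    ∑ i, max (v i - ρ) 0 = ∑ i ∈ S, max (v i - ρ) 0 := by
  refine (sum_subset (subset_univ S) fun i _ hiS => max_eq_right ?_).symm
  by_contra! h
  exact hiS (hS (mem_filter.mpr ⟨mem_univ i, sub_pos.mp h⟩))

end

theorem add_max_sub_le_mul {lam ρ ε x : ℝ} (hε : 0 ≤ ε) (hx : lam ≤ x) (h1 : lam ≤ ρ)
    (h2 : ρ ≤ (1 + ε) * lam) : ρ + max (x - ρ) 0 ≤ (1 + ε) * x := by
  rcases le_total x ρ with hxρ | hρx
  · rw [max_eq_right (sub_nonpos.mpr hxρ), add_zero]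
    exact h2.trans (mul_le_mul_of_nonneg_left hx (by linarith))
  · rw [max_eq_left (sub_nonneg.mpr hρx), add_sub_cancel]
    nlinarith [mul_le_mul_of_nonneg_left hx hε]

theorem mul_add_sum_max_sub_le_mul_Topl {ι : Type*} [Fintype ι] {ℓ : ℕ} (hℓ : 1 ≤ ℓ)
    (hℓn : ℓ ≤ Fintype.card ι) (v : ι → ℝ) {ε ρ : ℝ} (hε : 0 ≤ ε) (h1 : nthLargest ℓ v ≤ ρ)
    (h2 : ρ ≤ (1 + ε) * nthLargest ℓ v) :
    ℓ * ρ + ∑ i, max (v i - ρ) 0 ≤ (1 + ε) * Topl ℓ v := by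
  classical
  have hBF : ({i | ρ < v i} : Finset ι) ⊆ ({i | nthLargest ℓ v ≤ v i} : Finset ι) :=
    monotone_filter_right _ fun i _ hi => h1.trans hi.le
  have hB : #{i | ρ < v i} ≤ ℓ :=
    ((card_le_card (monotone_filter_right _ fun i _ hi => h1.trans_lt hi)).trans_lt
      (card_filter_nthLargest_lt_lt hℓ)).le
  obtain ⟨S, hBS, hSF, hS⟩ := exists_subsuperset_card_eq hBF hB (le_card_filter_nthLargest_le hℓn)
  calc ℓ * ρ + ∑ i, max (v i - ρ) 0 = ∑ i ∈ S, (ρ + max (v i - ρ) 0) := by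
        rw [sum_max_sub_eq_sum_of_subset hBS, sum_add_distrib, sum_const, hS, nsmul_eq_mul]
    _ ≤ ∑ i ∈ S, (1 + ε) * v i :=
        sum_le_sum fun i hi => add_max_sub_le_mul hε (mem_filter.mp (hSF hi)).2 h1 h2
    _ = (1 + ε) * ∑ i ∈ S, v i := (mul_sum ..).symm
    _ ≤ (1 + ε) * Topl ℓ v := mul_le_mul_of_nonneg_left (sum_le_Topl hS) (by linarith)

theorem stmt1_general (n ℓ : ℕ) (hℓ1 : 1 ≤ ℓ) (hℓn : ℓ ≤ n)
    (v : Fin n → ℝ)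
    (ε ρ : ℝ) (hε : 0 ≤ ε)
    (h1 : nthLargest ℓ v ≤ ρ) (h2 : ρ ≤ (1 + ε) * nthLargest ℓ v) :
    (ℓ : ℝ) * ρ + ∑ i, max (v i - ρ) 0 ≤ (1 + ε) * Topl ℓ v :=
  mul_add_sum_max_sub_le_mul_Topl hℓ1 (by rwa [Fintype.card_fin]) v hε h1 h2

theorem stmt1 (n ℓ : ℕ) (hℓ1 : 1 ≤ ℓ) (hℓn : ℓ ≤ n)
    (v : Fin n → ℝ) (hv : ∀ i, 0 ≤ v i)
    (ε ρ : ℝ) (hε : 0 ≤ ε) (hρ0 : 0 ≤ ρ)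
    (h1 : nthLargest ℓ v ≤ ρ) (h2 : ρ ≤ (1 + ε) * nthLargest ℓ v) :
    (ℓ : ℝ) * ρ + ∑ i, max (v i - ρ) 0 ≤ (1 + ε) * Topl ℓ v :=
  stmt1_general n ℓ hℓ1 hℓn v ε ρ hε h1 h2
end

section
/- Let (C, d) be a finite metric space with n = |C| ≥ k ≥ 1 points. Let OPT_{kMCF} be the minimum total edge cost of a spanning forest of the complete graph on C with exactly k connected components, and let OPT_n be the optimal k-median cost min_{S⊆C, |S|≤k, S≠∅} ∑_{j∈C} d(j,S). Then OPT_{kMCF} ≤ OPT_n ≤ n · OPT_{kMCF}. -/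
/-!
Given at most `k` centres `S`, pad them to a set `T ⊇ S` of exactly `k` points and join every
point outside `T` to its nearest centre in `S`: this star forest has one component per point of
`T`, so exactly `k` components, and its cost is at most the `k`-median cost of `S`. Conversely, taking one
point of each component of a `k`-forest as centres, every point is joined to its centre by a
path of the forest, so by the triangle inequality its distance to the centres is at most the
cost of the forest; summing over the `n` points gives the factor `n`.
-/

open Finset

theorem csInf_le_csInf_of_forall_exists_le {α : Type*} [ConditionallyCompleteLattice α]
    {s t : Set α} (hs : BddBelow s) (ht : t.Nonempty) (h : ∀ y ∈ t, ∃ x ∈ s, x ≤ y) :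
    sInf s ≤ sInf t :=
  le_csInf ht fun y hy => let ⟨_, hx, hxy⟩ := h y hy; (csInf_le hs hx).trans hxy

theorem Real.sInf_le_mul_sInf {s t : Set ℝ} {c : ℝ} (hc : 0 ≤ c) (hs : BddBelow s)
    (ht : t.Nonempty) (h : ∀ y ∈ t, ∃ x ∈ s, x ≤ c * y) : sInf s ≤ c * sInf t := by
  rw [← smul_eq_mul, ← Real.sInf_smul_of_nonneg hc]
  refine csInf_le_csInf_of_forall_exists_le hs ht.smul_set ?_
  rintro _ ⟨y, hy, rfl⟩
  exact h y hy

namespace SimpleGraph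

variable {V : Type*} {G : SimpleGraph V}

theorem natCard_connectedComponent_eq_of_reachable_iff {α : Type*} (f : V → α)
    (h : ∀ u v, G.Reachable u v ↔ f u = f v) :
    Nat.card G.ConnectedComponent = Nat.card (Set.range f) :=
  Nat.card_congr ((Quot.congrRight h).trans (Setoid.quotientKerEquivRange f))

theorem isBridge_of_forall_adj_eq {u v : V} (huv : u ≠ v) (h : ∀ w, G.Adj u w → w = v) :
    G.IsBridge s(u, v) := by
  rintro ⟨p⟩
  cases p with
  | nil => exact huv rfl
  | cons hadj _ =>
    rw [deleteEdges_adj] at hadj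
    exact hadj.2 (by rw [h _ hadj.1]; rfl)

def starForest (T : Set V) (g : V → V) : SimpleGraph V :=
  fromRel fun u v => u ∉ T ∧ v = g u

section StarForest

variable {T : Set V} {g : V → V}

theorem starForest_adj_self (hg : ∀ v, g v ∈ T) {v : V} (hv : v ∉ T) :
    (starForest T g).Adj v (g v) :=
  (fromRel_adj _ _ _).mpr ⟨fun h => hv (h ▸ hg v), Or.inl ⟨hv, rfl⟩⟩

theorem eq_of_starForest_adj (hg : ∀ v, g v ∈ T) {u v : V} (hu : u ∉ T)
    (huv : (starForest T g).Adj u v) : v = g u := by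
  obtain ⟨-, ⟨-, rfl⟩ | ⟨-, rfl⟩⟩ := (fromRel_adj _ _ _).mp huv
  · rfl
  · exact absurd (hg v) hu

theorem isAcyclic_starForest (hg : ∀ v, g v ∈ T) : (starForest T g).IsAcyclic := by
  have leaf_isBridge : ∀ {v}, v ∉ T → (starForest T g).IsBridge s(v, g v) := fun hv =>
    isBridge_of_forall_adj_eq (starForest_adj_self hg hv).ne fun _ => eq_of_starForest_adj hg hv
  refine isAcyclic_iff_forall_adj_isBridge.mpr fun u v huv => ?_
  obtain ⟨-, ⟨hu, rfl⟩ | ⟨hv, rfl⟩⟩ := (fromRel_adj _ _ _).mp huv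
  · exact leaf_isBridge hu
  · exact Sym2.eq_swap ▸ leaf_isBridge hv

theorem natCard_connectedComponent_starForest (hg : ∀ v, g v ∈ T) :
    Nat.card (starForest T g).ConnectedComponent = Nat.card T := by
  classical
  set centre : V → V := fun v => if v ∈ T then v else g v
  have centre_of_mem : ∀ {v}, v ∈ T → centre v = v := fun hv => if_pos hv
  have centre_of_not_mem : ∀ {v}, v ∉ T → centre v = g v := fun hv => if_neg hv
  have reachable_centre : ∀ v, (starForest T g).Reachable v (centre v) := fun v => by
    by_cases hv : v ∈ T
    · rw [centre_of_mem hv]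
    · rw [centre_of_not_mem hv]; exact (starForest_adj_self hg hv).reachable
  have centre_eq_of_adj : ∀ {u v}, (starForest T g).Adj u v → centre u = centre v := by
    intro u v huv
    obtain ⟨-, ⟨hu, rfl⟩ | ⟨hv, rfl⟩⟩ := (fromRel_adj _ _ _).mp huv
    · rw [centre_of_not_mem hu, centre_of_mem (hg u)]
    · rw [centre_of_not_mem hv, centre_of_mem (hg v)]
  have hrange : Set.range centre = T := by
    refine Set.Subset.antisymm ?_ fun v hv => ⟨v, centre_of_mem hv⟩
    rintro _ ⟨v, rfl⟩
    by_cases hv : v ∈ T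
    · rwa [centre_of_mem hv]
    · rw [centre_of_not_mem hv]; exact hg v
  rw [natCard_connectedComponent_eq_of_reachable_iff centre, hrange]
  refine fun u v => ⟨fun h => ?_, fun h => ?_⟩
  · obtain ⟨p⟩ := h
    induction p with
    | nil => rfl
    | cons huw _ ih => exact (centre_eq_of_adj huw).trans ih
  · exact (reachable_centre u).trans (h ▸ (reachable_centre v).symm)

theorem edgeSet_starForest (hg : ∀ v, g v ∈ T) :
    (starForest T g).edgeSet = (fun v => s(v, g v)) '' Tᶜ := by
  ext e
  induction e using Sym2.ind with | _ u v
  simp only [mem_edgeSet, Set.mem_image, Set.mem_compl_iff]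
  constructor
  · intro huv
    obtain ⟨-, ⟨hu, rfl⟩ | ⟨hv, rfl⟩⟩ := (fromRel_adj _ _ _).mp huv
    · exact ⟨u, hu, rfl⟩
    · exact ⟨v, hv, Sym2.eq_swap⟩
  · rintro ⟨w, hw, hwuv⟩
    rw [← mem_edgeSet, ← hwuv]
    exact starForest_adj_self hg hw

theorem injOn_starForest_edge (hg : ∀ v, g v ∈ T) :
    Set.InjOn (fun v => s(v, g v)) Tᶜ := by
  intro u hu v hv huv
  rcases Sym2.eq_iff.mp huv with ⟨h, -⟩ | ⟨h, -⟩
  · exact h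
  · exact absurd (h ▸ hg v) hu

end StarForest

end SimpleGraph

noncomputable def edgeLength {α : Type*} [PseudoMetricSpace α] : Sym2 α → ℝ :=
  Sym2.lift ⟨fun a b => dist a b, fun a b => dist_comm a b⟩

section Metric

variable {α : Type*} [PseudoMetricSpace α]

@[simp]
theorem edgeLength_mk (a b : α) : edgeLength s(a, b) = dist a b := rfl

theorem edgeLength_nonneg (e : Sym2 α) : 0 ≤ edgeLength e := by
  induction e using Sym2.ind with
  | _ a b => exact dist_nonneg

theorem dist_le_sum_edgeLength_of_walk {G : SimpleGraph α} {u v : α} (p : G.Walk u v) :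
    dist u v ≤ (p.edges.map edgeLength).sum := by
  induction p with
  | nil => simp
  | @cons a b c _ p ih =>
    simp only [SimpleGraph.Walk.edges_cons, List.map_cons, List.sum_cons, edgeLength_mk]
    linarith [dist_triangle a b c]

theorem dist_le_sum_edgeLength_of_reachable {G : SimpleGraph α} {u v : α}
    {s : Finset (Sym2 α)} (hs : G.edgeSet ⊆ s) (huv : G.Reachable u v) :
    dist u v ≤ ∑ e ∈ s, edgeLength e := by
  classical
  obtain ⟨p⟩ := huv
  calc dist u v ≤ (p.bypass.edges.map edgeLength).sum := dist_le_sum_edgeLength_of_walk _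
    _ = ∑ e ∈ p.bypass.edges.toFinset, edgeLength e :=
      (List.sum_toFinset _ p.bypass_isPath.isTrail.edges_nodup).symm
    _ ≤ ∑ e ∈ s, edgeLength e := by
      refine sum_le_sum_of_subset_of_nonneg (fun e he => ?_) fun e _ _ => edgeLength_nonneg e
      exact hs (p.bypass.edges_subset_edgeSet (List.mem_toFinset.mp he))

end Metric

section KMedian

variable {C : Type*} [Fintype C] [PseudoMetricSpace C]

theorem exists_forest_sum_edgeLength_le {T : Finset C} {g : C → C} (hg : ∀ v, g v ∈ T) :
    ∃ (G : SimpleGraph C) (s : Finset (Sym2 C)),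
      (↑s : Set (Sym2 C)) = G.edgeSet ∧ G.IsAcyclic ∧
      Nat.card G.ConnectedComponent = #T ∧ ∑ e ∈ s, edgeLength e ≤ ∑ j, dist j (g j) := by
  classical
  refine ⟨SimpleGraph.starForest T g, (univ.filter (· ∉ T)).image fun j => s(j, g j), ?_,
    SimpleGraph.isAcyclic_starForest hg, ?_, ?_⟩
  · rw [SimpleGraph.edgeSet_starForest hg, coe_image, coe_filter]
    simp only [mem_univ, true_and, Set.compl_def, mem_coe]
  · rw [SimpleGraph.natCard_connectedComponent_starForest hg, Nat.card_coe_set_eq,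
      Set.ncard_coe_finset]
  · rw [sum_image fun u hu v hv => SimpleGraph.injOn_starForest_edge hg (by simpa using hu)
      (by simpa using hv)]
    exact sum_le_sum_of_subset_of_nonneg (filter_subset _ _) fun j _ _ => dist_nonneg

theorem exists_forest_sum_edgeLength_le_sum_infDist {k : ℕ} (hk : k ≤ Fintype.card C)
    {S : Finset C} (hS : S.Nonempty) (hSk : #S ≤ k) :
    ∃ (G : SimpleGraph C) (s : Finset (Sym2 C)),
      (↑s : Set (Sym2 C)) = G.edgeSet ∧ G.IsAcyclic ∧ Nat.card G.ConnectedComponent = k ∧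
      ∑ e ∈ s, edgeLength e ≤ ∑ j, S.inf' hS (fun a => dist j a) := by
  obtain ⟨T, hST, rfl⟩ := exists_superset_card_eq hSk hk
  choose nearest hnearest_mem hnearest using fun j : C => exists_mem_eq_inf' hS (dist j)
  simp only [hnearest]
  exact exists_forest_sum_edgeLength_le fun j => hST (hnearest_mem j)

theorem exists_centres_sum_infDist_le {G : SimpleGraph C} {s : Finset (Sym2 C)}
    [Nonempty C] (hs : (↑s : Set (Sym2 C)) = G.edgeSet) :
    ∃ (S : Finset C) (hS : S.Nonempty), #S ≤ Nat.card G.ConnectedComponent ∧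
      ∑ j, S.inf' hS (fun a => dist j a) ≤ Fintype.card C * ∑ e ∈ s, edgeLength e := by
  classical
  have : Fintype G.ConnectedComponent := Fintype.ofFinite _
  refine ⟨univ.image fun c : G.ConnectedComponent => c.out, univ_nonempty.image _, ?_, ?_⟩
  · rw [Nat.card_eq_fintype_card, ← card_univ]
    exact card_image_le
  · rw [← nsmul_eq_mul, ← card_univ, ← sum_const]
    refine sum_le_sum fun j _ => (inf'_le _ (mem_image_of_mem _ (mem_univ
      (G.connectedComponentMk j)))).trans ?_
    exact dist_le_sum_edgeLength_of_reachable hs.ge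
      (SimpleGraph.ConnectedComponent.exact (Quot.out_eq _).symm)

end KMedian

theorem stmt4 {C : Type*} [Fintype C] [MetricSpace C] (n k : ℕ)
    (hn : n = Fintype.card C) (hk : 1 ≤ k) (hkn : k ≤ n)
    (OPTkMCF OPTn : ℝ)
    (hF : OPTkMCF = sInf {x : ℝ | ∃ (G : SimpleGraph C) (s : Finset (Sym2 C)),
      (↑s : Set (Sym2 C)) = G.edgeSet ∧ G.IsAcyclic ∧
      Nat.card G.ConnectedComponent = k ∧
      x = ∑ e ∈ s, Sym2.lift ⟨fun a b => dist a b, fun a b => dist_comm a b⟩ e})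
    (hM : OPTn = sInf {x : ℝ | ∃ (S : Finset C) (hS : S.Nonempty),
      S.card ≤ k ∧ x = ∑ j : C, S.inf' hS (fun a => dist j a)}) :
    OPTkMCF ≤ OPTn ∧ OPTn ≤ (n : ℝ) * OPTkMCF := by
  subst hn hF hM
  obtain ⟨c⟩ : Nonempty C := Fintype.card_pos_iff.mp (hk.trans hkn)
  have : Nonempty C := ⟨c⟩
  have forest_of_centres := @exists_forest_sum_edgeLength_le_sum_infDist _ _ _ k hkn
  constructor
  · refine csInf_le_csInf_of_forall_exists_le ⟨0, ?_⟩
      ⟨_, {c}, singleton_nonempty c, by simpa, rfl⟩ ?_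
    · rintro _ ⟨G, s, -, -, -, rfl⟩
      exact sum_nonneg fun e _ => edgeLength_nonneg e
    · rintro _ ⟨S, hS, hSk, rfl⟩
      obtain ⟨G, s, hs, hG, hGk, hcost⟩ := forest_of_centres hS hSk
      exact ⟨_, ⟨G, s, hs, hG, hGk, rfl⟩, hcost⟩
  · refine Real.sInf_le_mul_sInf (Nat.cast_nonneg _) ⟨0, ?_⟩ ?_ ?_
    · rintro _ ⟨S, hS, -, rfl⟩
      exact sum_nonneg fun j _ => le_inf' hS _ fun a _ => dist_nonneg
    · obtain ⟨G, s, hs, hG, hGk, -⟩ := forest_of_centres (singleton_nonempty c) (by simpa)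
      exact ⟨_, G, s, hs, hG, hGk, rfl⟩
    · rintro _ ⟨G, s, hs, -, rfl, rfl⟩
      obtain ⟨S, hS, hSk, hcost⟩ := exists_centres_sum_infDist_le hs
      exact ⟨_, ⟨S, hS, hSk, rfl⟩, hcost⟩
end

section
/- Let (C, d) be a finite metric space where each i ∈ C has integer weight w_i ≥ 0 with ∑_i w_i = n, and set w'_i = min{w_i, ℓ}. Let B, α, ε > 0 with B a parameter, and suppose d̃ : C × C → ℝ_{≥0} is a metric such that for all i, j ∈ C with d(i,j) ≤ B_{i,0} (where B_{i,0} is any threshold with B_{i,0} ≥ B/w'_i) we have d(i,j) − κ_i ≤ d̃(i,j) ≤ (1+ε)·d(i,j) + κ_i, with κ_i = εB/(α w'_i n). If T ⊆ C satisfies d(i,T) ≤ B_{i,0} for all i ∈ C and OPT(d) denotes the optimal ℓ-centrum value for d with OPT(d) ≥ B/α, then Top_ℓ(d̃(C,T|w)) ≤ (1+ε)·Top_ℓ(d(C,T|w)) + ε·OPT(d). -/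
open Finset

/-- `wTopl ℓ w v` : Top-ℓ value of the weighted vector having `w i` coordinates of
value `v i` for each `i`, expressed as the maximum over choices of `ℓ` agents
(with multiplicities respecting the weights) of the chosen total. -/
noncomputable def wTopl {ι : Type*} [Fintype ι] (ℓ : ℕ) (w : ι → ℕ) (v : ι → ℝ) : ℝ :=
  sSup {x : ℝ | ∃ γ : ι → ℕ, (∀ i, γ i ≤ w i) ∧ (∑ i, γ i) = ℓ ∧
    x = ∑ i, (γ i : ℝ) * v i}

/-! For every agent `i`, its `d`-nearest center `a ∈ T` is within the threshold `B_{i,0}`, so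
`d̃(i,T) ≤ d̃(i,a) ≤ (1+ε)·d(i,T) + κ_i`. Summed over any `ℓ` selected agents, the additive errors
total at most `εB/α ≤ ε·OPT(d)`: a location that is selected at all has `w'_i ≥ 1`, so each selected
copy contributes at most `εB/(αn)`, and there are `ℓ ≤ n` copies. -/

section Selections

variable {ι : Type*} [Fintype ι] {ℓ : ℕ} {w γ : ι → ℕ}

theorem exists_le_sum_eq_of_le_sum (h : ℓ ≤ ∑ i, w i) : ∃ γ : ι → ℕ, γ ≤ w ∧ ∑ i, γ i = ℓ := by
  classical
  induction ℓ with
  | zero => exact ⟨0, fun _ => Nat.zero_le _, by simp⟩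
  | succ m ih =>
    obtain ⟨γ, hγw, hγm⟩ := ih (by omega)
    obtain ⟨i, hi⟩ : ∃ i, γ i < w i := by
      by_contra! hc
      have := sum_le_sum fun i (_ : i ∈ univ) => hc i
      omega
    refine ⟨γ + Pi.single i 1, fun j => ?_, by simp [sum_add_distrib, hγm]⟩
    rcases eq_or_ne j i with rfl | hj
    · simpa using hi
    · simpa [hj] using hγw j

theorem sum_mul_div_min_mul_le {n : ℕ} {x : ℝ} (hγw : γ ≤ w) (hγ : ∑ i, γ i = ℓ)
    (hℓn : ℓ ≤ n) (hx : 0 ≤ x) :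
    ∑ i, (γ i : ℝ) * (x / ((min (w i) ℓ : ℕ) * n)) ≤ x := by
  calc ∑ i, (γ i : ℝ) * (x / ((min (w i) ℓ : ℕ) * n))
      ≤ ∑ i, (γ i : ℝ) * (x / n) := by
        refine sum_le_sum fun i _ => ?_
        rcases Nat.eq_zero_or_pos (γ i) with h0 | hpos
        · simp [h0]
        have hγℓ : γ i ≤ ℓ := hγ ▸ single_le_sum (fun j _ => (γ j).zero_le) (mem_univ i)
        have hmin : 1 ≤ min (w i) ℓ := le_min (hpos.trans_le (hγw i)) (hpos.trans_le hγℓ)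
        have hn : (0 : ℝ) < n := by exact_mod_cast (hpos.trans_le hγℓ).trans_le hℓn
        gcongr
        exact le_mul_of_one_le_left n.cast_nonneg (by exact_mod_cast hmin)
    _ = ℓ * (x / n) := by rw [← sum_mul, ← hγ]; push_cast; rfl
    _ ≤ x := by
        rw [← mul_div_assoc, mul_comm]
        exact div_le_of_le_mul₀ n.cast_nonneg hx (by gcongr)

end Selections

section TopL

variable {ι : Type*} [Fintype ι] {ℓ : ℕ} {w γ : ι → ℕ}

theorem bddAbove_wTopl (ℓ : ℕ) (w : ι → ℕ) (v : ι → ℝ) :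
    BddAbove {x : ℝ | ∃ γ : ι → ℕ, (∀ i, γ i ≤ w i) ∧ (∑ i, γ i) = ℓ ∧
      x = ∑ i, (γ i : ℝ) * v i} := by
  refine ⟨∑ i, (w i : ℝ) * |v i|, ?_⟩
  rintro x ⟨γ, hγ, -, rfl⟩
  refine sum_le_sum fun i _ => ?_
  calc (γ i : ℝ) * v i ≤ γ i * |v i| := by gcongr; exact le_abs_self _
    _ ≤ w i * |v i| := by gcongr; exact hγ i

theorem sum_le_wTopl (hγw : γ ≤ w) (hγ : ∑ i, γ i = ℓ) (v : ι → ℝ) :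
    ∑ i, (γ i : ℝ) * v i ≤ wTopl ℓ w v :=
  le_csSup (bddAbove_wTopl ℓ w v) ⟨γ, hγw, hγ, rfl⟩

theorem wTopl_le {v : ι → ℝ} {b : ℝ} (hℓ : ℓ ≤ ∑ i, w i)
    (h : ∀ γ : ι → ℕ, γ ≤ w → ∑ i, γ i = ℓ → ∑ i, (γ i : ℝ) * v i ≤ b) :
    wTopl ℓ w v ≤ b := by
  obtain ⟨γ, hγw, hγ⟩ := exists_le_sum_eq_of_le_sum hℓ
  exact csSup_le ⟨_, γ, hγw, hγ, rfl⟩ fun x ⟨γ, hγw, hγ, hx⟩ => hx ▸ h γ hγw hγ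

theorem wTopl_le_mul_add {u v κ : ι → ℝ} {c K : ℝ} (hℓ : ℓ ≤ ∑ i, w i) (hc : 0 ≤ c)
    (hv : ∀ i, v i ≤ c * u i + κ i)
    (hκ : ∀ γ : ι → ℕ, γ ≤ w → ∑ i, γ i = ℓ → ∑ i, (γ i : ℝ) * κ i ≤ K) :
    wTopl ℓ w v ≤ c * wTopl ℓ w u + K :=
  wTopl_le hℓ fun γ hγw hγ => calc
    ∑ i, (γ i : ℝ) * v i ≤ ∑ i, (γ i : ℝ) * (c * u i + κ i) := by gcongr with i; exact hv i
    _ = c * ∑ i, (γ i : ℝ) * u i + ∑ i, (γ i : ℝ) * κ i := by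
        rw [mul_sum, ← sum_add_distrib]
        exact sum_congr rfl fun i _ => by ring
    _ ≤ c * wTopl ℓ w u + K := by gcongr; exacts [sum_le_wTopl hγw hγ u, hκ γ hγw hγ]

end TopL

theorem Finset.inf'_le_mul_inf'_add {α : Type*} {s : Finset α} (hs : s.Nonempty) {f g : α → ℝ}
    {b c κ : ℝ} (hfb : s.inf' hs f ≤ b) (hgf : ∀ a ∈ s, f a ≤ b → g a ≤ c * f a + κ) :
    s.inf' hs g ≤ c * s.inf' hs f + κ := by
  obtain ⟨a, ha, hfa⟩ := s.exists_mem_eq_inf' hs f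
  rw [hfa] at hfb ⊢
  exact (inf'_le g ha).trans (hgf a ha hfb)

theorem stmt8_general {C : Type*} [Fintype C] [MetricSpace C] (n ℓ : ℕ)
    (hℓn : ℓ ≤ n)
    (w : C → ℕ) (hw : ∑ i : C, w i = n)
    (B α ε : ℝ) (hB : 0 < B) (hα : 0 < α) (hε : 0 < ε)
    -- thresholds B_{i,0} with B_{i,0} ≥ B / w'_i, where w'_i = min{w_i, ℓ}
    (B0 : C → ℝ)
    (dt : C → C → ℝ)
    -- d̃ approximates d on pairs of distance ≤ B_{i,0}, with κ_i = εB/(α w'_i n)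
    (hclose : ∀ i j, dist i j ≤ B0 i →
      dist i j - ε * B / (α * ((min (w i) ℓ : ℕ) : ℝ) * (n : ℝ)) ≤ dt i j ∧
      dt i j ≤ (1 + ε) * dist i j + ε * B / (α * ((min (w i) ℓ : ℕ) : ℝ) * (n : ℝ)))
    -- OPT(d) : optimal weighted ℓ-centrum value for metric d
    (OPTd : ℝ)
    (hBopt : B ≤ α * OPTd)
    (T : Finset C) (hT : T.Nonempty)
    (hTB : ∀ i, T.inf' hT (fun a => dist i a) ≤ B0 i) :
    wTopl ℓ w (fun i => T.inf' hT (fun a => dt i a)) ≤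
      (1 + ε) * wTopl ℓ w (fun i => T.inf' hT (fun a => dist i a)) + ε * OPTd := by
  refine wTopl_le_mul_add (hw ▸ hℓn) (by linarith)
    (fun i => T.inf'_le_mul_inf'_add hT (hTB i) fun a _ hia => (hclose i a hia).2)
    fun γ hγw hγ => ?_
  calc ∑ i, (γ i : ℝ) * (ε * B / (α * ((min (w i) ℓ : ℕ) : ℝ) * n))
      = ∑ i, (γ i : ℝ) * (ε * B / α / ((min (w i) ℓ : ℕ) * n)) := by
        simp only [mul_assoc α, div_div]
    _ ≤ ε * B / α := sum_mul_div_min_mul_le hγw hγ hℓn (by positivity)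
    _ = ε * (B / α) := mul_div_assoc ε B α
    _ ≤ ε * OPTd := by
        gcongr
        rwa [div_le_iff₀' hα]

theorem stmt8 {C : Type*} [Fintype C] [MetricSpace C] (n k ℓ : ℕ)
    (hk : 1 ≤ k) (hℓ1 : 1 ≤ ℓ) (hℓn : ℓ ≤ n)
    (w : C → ℕ) (hw : ∑ i : C, w i = n)
    (B α ε : ℝ) (hB : 0 < B) (hα : 0 < α) (hε : 0 < ε)
    -- thresholds B_{i,0} with B_{i,0} ≥ B / w'_i, where w'_i = min{w_i, ℓ}
    (B0 : C → ℝ) (hB0 : ∀ i, B / ((min (w i) ℓ : ℕ) : ℝ) ≤ B0 i)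
    -- d̃ is a metric on C
    (dt : C → C → ℝ) (hdtnn : ∀ i j, 0 ≤ dt i j) (hdtsymm : ∀ i j, dt i j = dt j i)
    (hdtself : ∀ i, dt i i = 0) (hdttri : ∀ i j l, dt i l ≤ dt i j + dt j l)
    -- d̃ approximates d on pairs of distance ≤ B_{i,0}, with κ_i = εB/(α w'_i n)
    (hclose : ∀ i j, dist i j ≤ B0 i →
      dist i j - ε * B / (α * ((min (w i) ℓ : ℕ) : ℝ) * (n : ℝ)) ≤ dt i j ∧
      dt i j ≤ (1 + ε) * dist i j + ε * B / (α * ((min (w i) ℓ : ℕ) : ℝ) * (n : ℝ)))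
    -- OPT(d) : optimal weighted ℓ-centrum value for metric d
    (OPTd : ℝ)
    (hOPTd : OPTd = sInf {x : ℝ | ∃ (T' : Finset C) (hT' : T'.Nonempty),
      T'.card ≤ k ∧ x = wTopl ℓ w (fun i => T'.inf' hT' (fun a => dist i a))})
    (hBopt : B ≤ α * OPTd)
    (T : Finset C) (hT : T.Nonempty)
    (hTB : ∀ i, T.inf' hT (fun a => dist i a) ≤ B0 i) :
    wTopl ℓ w (fun i => T.inf' hT (fun a => dt i a)) ≤
      (1 + ε) * wTopl ℓ w (fun i => T.inf' hT (fun a => dist i a)) + ε * OPTd :=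
  stmt8_general n ℓ hℓn w hw B α ε hB hα hε B0 dt hclose OPTd hBopt T hT hTB
end

section
/- Let (C,d) be a finite metric space, S* = {c*_1,…,c*_k} an optimal ℓ-centrum solution with induced clusters C*_1,…,C*_k, and S the current center set. Fix parameters t_ℓ ≥ 0, β = 2, α = 3, γ = 4. Define r_ℓ(C*_q) = (∑_{j∈C*_q} (d(j,c*_q) − t_ℓ)^+)/|C*_q| and the core of an ℓ-far cluster as {j ∈ C*_q : (d(j,c*_q) − t_ℓ)^+ ≤ α·r_ℓ(C*_q)}. If S contains a point s with (d(s,c*_q) − t_ℓ)^+ ≤ α·r_ℓ(C*_q), then ∑_{j∈C*_q}(d(j,s) − β·t_ℓ)^+ ≤ (1+α)·∑_{j∈C*_q}(d(j,c*_q) − t_ℓ)^+. -/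
/-! For every point `j` of the cluster, the triangle inequality through the optimal center `c`
and subadditivity of `x ↦ max x 0` give `(d(j,s) - 2t)⁺ ≤ (d(j,c) - t)⁺ + (d(s,c) - t)⁺`.
Summing over the cluster, the second term contributes `|C| · (d(s,c) - t)⁺ ≤ |C| · α r = α ∑ (d(j,c) - t)⁺`. -/

open Finset

section

variable {X : Type*} [PseudoMetricSpace X]

lemma max_dist_sub_two_mul_le (x y z : X) (t : ℝ) :
    max (dist x y - 2 * t) 0 ≤ max (dist x z - t) 0 + max (dist y z - t) 0 :=
  calc max (dist x y - 2 * t) 0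
      ≤ max ((dist x z - t) + (dist y z - t)) (0 + 0) :=
        max_le_max (by linarith [dist_triangle_right x y z]) (add_zero 0).ge
    _ ≤ max (dist x z - t) 0 + max (dist y z - t) 0 := max_add_add_le_max_add_max

lemma sum_max_dist_sub_two_mul_le (A : Finset X) (s c : X) (t : ℝ) :
    ∑ j ∈ A, max (dist j s - 2 * t) 0 ≤
      ∑ j ∈ A, max (dist j c - t) 0 + #A * max (dist s c - t) 0 := by
  calc ∑ j ∈ A, max (dist j s - 2 * t) 0
      ≤ ∑ j ∈ A, (max (dist j c - t) 0 + max (dist s c - t) 0) :=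
        sum_le_sum fun j _ => max_dist_sub_two_mul_le j s c t
    _ = ∑ j ∈ A, max (dist j c - t) 0 + #A * max (dist s c - t) 0 := by
        rw [sum_add_distrib, sum_const, nsmul_eq_mul]

lemma sum_max_dist_sub_two_mul_le_of_mem_core (A : Finset X) (s c : X) (t α : ℝ)
    (hcore : max (dist s c - t) 0 ≤ α * ((∑ j ∈ A, max (dist j c - t) 0) / #A)) :
    ∑ j ∈ A, max (dist j s - 2 * t) 0 ≤ (1 + α) * ∑ j ∈ A, max (dist j c - t) 0 := by
  set cost := ∑ j ∈ A, max (dist j c - t) 0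
  -- `#A = 0` forces `cost = 0`, so the junk value of `cost / 0` is harmless.
  have hcard : (#A : ℝ) * (cost / #A) = cost :=
    mul_div_cancel_of_imp' fun h => by simp [cost, card_eq_zero.mp (Nat.cast_eq_zero.mp h)]
  calc ∑ j ∈ A, max (dist j s - 2 * t) 0
      ≤ cost + #A * max (dist s c - t) 0 := sum_max_dist_sub_two_mul_le A s c t
    _ ≤ cost + #A * (α * (cost / #A)) := by gcongr
    _ = (1 + α) * cost := by linear_combination α * hcard

end

theorem stmt9_general {C : Type*} [MetricSpace C]
    (Cq : Finset C) (cq : C) (tℓ : ℝ)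
    (s : C)
    -- r_ℓ(C*_q), the radius of the cluster
    (r : ℝ) (hr : r = (∑ j ∈ Cq, max (dist j cq - tℓ) 0) / (Cq.card : ℝ))
    -- s lies in the core of the cluster (α = 3)
    (hcore : max (dist s cq - tℓ) 0 ≤ 3 * r) :
    -- goodness with β = 2, bound (1 + α) = (1 + 3)
    ∑ j ∈ Cq, max (dist j s - 2 * tℓ) 0 ≤
      (1 + 3) * ∑ j ∈ Cq, max (dist j cq - tℓ) 0 :=
  sum_max_dist_sub_two_mul_le_of_mem_core Cq s cq tℓ 3 (hr ▸ hcore)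

theorem stmt9 {C : Type*} [Fintype C] [MetricSpace C]
    (Cq : Finset C) (hCq : Cq.Nonempty) (cq : C) (tℓ : ℝ) (htℓ : 0 ≤ tℓ)
    (S : Finset C) (s : C) (hs : s ∈ S)
    -- r_ℓ(C*_q), the radius of the cluster
    (r : ℝ) (hr : r = (∑ j ∈ Cq, max (dist j cq - tℓ) 0) / (Cq.card : ℝ))
    -- s lies in the core of the cluster (α = 3)
    (hcore : max (dist s cq - tℓ) 0 ≤ 3 * r) :
    -- goodness with β = 2, bound (1 + α) = (1 + 3)
    ∑ j ∈ Cq, max (dist j s - 2 * tℓ) 0 ≤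
      (1 + 3) * ∑ j ∈ Cq, max (dist j cq - tℓ) 0 :=
  stmt9_general Cq cq tℓ s r hr hcore
end

section
/- Let (C, d) be a finite metric space where agents are a subset of points and candidates A a (possibly different) finite subset; for each j ∈ C let top(j) ∈ A be a nearest candidate to j. Let S* ⊆ A be an optimal k-median solution with cost OPT = ∑_{j∈C} d(j, S*) and additionally assume ∑_{j∈C} d(j, top(j)) ≤ OPT. Then there exists S̃ ⊆ {top(j) : j ∈ C} with |S̃| ≤ k and ∑_{j∈C} min_{i∈S̃} d(i,j) ≤ 3·OPT. -/
/-!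
Send every optimal centre `i` to the candidate `top (φ i)` of the agent `φ i` minimising
`d(i, φ i) + d(φ i, top (φ i))`. For an agent `j` served by `i` in the optimal solution, the
triangle inequality and the choice of `φ i` (compared against `j` itself) give
`d(j, top (φ i)) ≤ d(j, i) + d(i, φ i) + d(φ i, top (φ i)) ≤ 2 d(j, i) + d(j, top j)`.
Summing over agents bounds the new cost by `2 OPT + ∑ⱼ d(j, top j) ≤ 3 OPT`.
-/

open Finset

section

variable {M : Type*} [MetricSpace M]

theorem dist_le_two_mul_dist_add_of_add_dist_le {x y z p q : M}
    (h : dist y p + dist p q ≤ dist y x + dist x z) :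
    dist x q ≤ 2 * dist x y + dist x z := by
  have hxq : dist x q ≤ dist x y + dist y p + dist p q := dist_triangle4 x y p q
  rw [dist_comm y x] at h
  linarith

theorem inf'_image_dist_le_two_mul_inf'_dist_add [DecidableEq M] {S : Finset M}
    (hS : S.Nonempty) {top φ : M → M} {j : M}
    (hφ : ∀ i, dist i (φ i) + dist (φ i) (top (φ i)) ≤ dist i j + dist j (top j)) :
    (S.image (top ∘ φ)).inf' (hS.image _) (dist j) ≤
      2 * S.inf' hS (dist j) + dist j (top j) := by
  obtain ⟨i, hi, hi_min⟩ := S.exists_mem_eq_inf' hS (dist j)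
  calc (S.image (top ∘ φ)).inf' (hS.image _) (dist j)
      ≤ dist j (top (φ i)) := inf'_le _ (mem_image_of_mem _ hi)
    _ ≤ 2 * dist j i + dist j (top j) :=
        dist_le_two_mul_dist_add_of_add_dist_le (hφ i)
    _ = 2 * S.inf' hS (dist j) + dist j (top j) := by rw [hi_min]

theorem exists_subset_image_card_le_sum_inf'_dist_le [DecidableEq M] {C : Finset M}
    (hC : C.Nonempty) (top : M → M) {S : Finset M} (hS : S.Nonempty) :
    ∃ (T : Finset M) (hT : T.Nonempty), T ⊆ C.image top ∧ T.card ≤ S.card ∧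
      ∑ j ∈ C, T.inf' hT (dist j) ≤
        2 * ∑ j ∈ C, S.inf' hS (dist j) + ∑ j ∈ C, dist j (top j) := by
  choose φ hφC hφ using fun i : M => C.exists_min_image (fun j => dist i j + dist j (top j)) hC
  refine ⟨S.image (top ∘ φ), hS.image _,
    image_subset_iff.2 fun i _ => mem_image_of_mem top (hφC i), card_image_le, ?_⟩
  calc ∑ j ∈ C, (S.image (top ∘ φ)).inf' (hS.image _) (dist j)
      ≤ ∑ j ∈ C, (2 * S.inf' hS (dist j) + dist j (top j)) :=
        sum_le_sum fun j hj => inf'_image_dist_le_two_mul_inf'_dist_add hS (hφ · j hj)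
    _ = 2 * ∑ j ∈ C, S.inf' hS (dist j) + ∑ j ∈ C, dist j (top j) := by
        rw [sum_add_distrib, mul_sum]

end

theorem stmt14_general {M : Type*} [MetricSpace M] [DecidableEq M] (C : Finset M) (hC : C.Nonempty)
    (k : ℕ)
    -- top j : a nearest candidate to agent j
    (top : M → M)
    -- S* : an optimal k-median solution, of cost OPT
    (Sstar : Finset M) (hSne : Sstar.Nonempty)
    (hScard : Sstar.card ≤ k)
    (OPT : ℝ) (hOPT : OPT = ∑ j ∈ C, Sstar.inf' hSne (fun a => dist j a))
    -- additional assumption: total distance to the nearest candidates is ≤ OPT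
    (htopsum : ∑ j ∈ C, dist j (top j) ≤ OPT) :
    ∃ (St : Finset M) (hSt : St.Nonempty), St ⊆ C.image top ∧ St.card ≤ k ∧
      ∑ j ∈ C, St.inf' hSt (fun a => dist j a) ≤ 3 * OPT := by
  obtain ⟨St, hSt, hsub, hcard, hcost⟩ :=
    exists_subset_image_card_le_sum_inf'_dist_le hC top hSne
  refine ⟨St, hSt, hsub, hcard.trans hScard, ?_⟩
  rw [← hOPT] at hcost
  linarith

theorem stmt14 {M : Type*} [MetricSpace M] [DecidableEq M] (C A : Finset M) (hC : C.Nonempty)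
    (k : ℕ) (hk : 1 ≤ k)
    -- top j : a nearest candidate to agent j
    (top : M → M) (htopmem : ∀ j ∈ C, top j ∈ A)
    (htopnear : ∀ j ∈ C, ∀ a ∈ A, dist j (top j) ≤ dist j a)
    -- S* : an optimal k-median solution, of cost OPT
    (Sstar : Finset M) (hSsub : Sstar ⊆ A) (hSne : Sstar.Nonempty)
    (hScard : Sstar.card ≤ k)
    (OPT : ℝ) (hOPT : OPT = ∑ j ∈ C, Sstar.inf' hSne (fun a => dist j a))
    (hopt : ∀ (T : Finset M) (hT : T.Nonempty), T ⊆ A → T.card ≤ k →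
      OPT ≤ ∑ j ∈ C, T.inf' hT (fun a => dist j a))
    -- additional assumption: total distance to the nearest candidates is ≤ OPT
    (htopsum : ∑ j ∈ C, dist j (top j) ≤ OPT) :
    ∃ (St : Finset M) (hSt : St.Nonempty), St ⊆ C.image top ∧ St.card ≤ k ∧
      ∑ j ∈ C, St.inf' hSt (fun a => dist j a) ≤ 3 * OPT :=
  stmt14_general C hC k top Sstar hSne hScard OPT hOPT htopsum
end

section
/- Let (C∪A, d) be a finite metric space with agents C and candidates A; for j ∈ C let top(j) ∈ A be a nearest candidate. Let S* ⊆ A be an optimal 1-center-objective (k-center) solution of radius OPT₁ = max_{j∈C} d(j,S*) with induced clusters C*_1,…,C*_k. If a greedy procedure opens centers top(s_t) where s_t is an agent farthest from the currently open set, and at some step the selected agent s_t satisfies top(s_t) = a₂ where some a₁ with both a₁, a₂ belonging to the same optimal cluster C*_i was already opened, then every agent j ∈ C satisfies d(j, S_{t−1}) ≤ 3·OPT₁, where S_{t−1} is the set of centers open before step t. -/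
open Finset

/-! An agent is within `OPT₁` of its nearest candidate, so `s_t` is within `3·OPT₁` of the open
center `a₁` through `a₂ = top(s_t)` and the cluster center `c`; by the farthest-point rule every
agent is at least as close to the open centers as `s_t`. -/

lemma dist_le_three_mul_of_dist_le {M : Type*} [PseudoMetricSpace M] {s a₁ a₂ c : M} {r : ℝ}
    (hs : dist s a₂ ≤ r) (h₁ : dist a₁ c ≤ r) (h₂ : dist a₂ c ≤ r) : dist s a₁ ≤ 3 * r := by
  have := dist_triangle4 s a₂ c a₁
  rw [dist_comm c a₁] at this
  linarith

lemma dist_le_sup'_inf'_of_nearest {M : Type*} [PseudoMetricSpace M] {C A S : Finset M}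
    (hC : C.Nonempty) (hS : S.Nonempty) (hSA : S ⊆ A) {j x : M} (hj : j ∈ C)
    (hx : ∀ a ∈ A, dist j x ≤ dist j a) :
    dist j x ≤ C.sup' hC (fun j => S.inf' hS (fun a => dist j a)) :=
  calc dist j x ≤ S.inf' hS (fun a => dist j a) := le_inf' _ _ fun a ha => hx a (hSA ha)
    _ ≤ _ := le_sup' (fun j => S.inf' hS (fun a => dist j a)) hj

theorem stmt15_general {M : Type*} [MetricSpace M] (C A : Finset M) (hC : C.Nonempty)
    -- top j : a nearest candidate to agent j
    (top : M → M)
    (htopnear : ∀ j ∈ C, ∀ a ∈ A, dist j (top j) ≤ dist j a)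
    -- S* : an optimal k-center solution (a subset of candidates) of radius OPT₁
    (Sstar : Finset M) (hSsub : Sstar ⊆ A) (hSne : Sstar.Nonempty)
    (OPT1 : ℝ) (hOPT1 : OPT1 = C.sup' hC (fun j => Sstar.inf' hSne (fun a => dist j a)))
    -- s_t ∈ C is the selected agent, with a₂ = top(s_t)
    (st : M) (hst : st ∈ C) (a₁ a₂ : M) (ha₂ : a₂ = top st)
    -- a₁ and a₂ belong to the same optimal cluster, with center c ∈ S*
    (c : M) (ha₁c : dist a₁ c ≤ OPT1) (ha₂c : dist a₂ c ≤ OPT1)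
    -- a₁ was already opened: a₁ ∈ S_{t-1}
    (St1 : Finset M) (hSt1 : St1.Nonempty) (ha₁mem : a₁ ∈ St1)
    -- farthest-point rule: s_t is an agent farthest from the open centers
    (hfar : ∀ j ∈ C, St1.inf' hSt1 (fun a => dist j a) ≤
      St1.inf' hSt1 (fun a => dist st a)) :
    ∀ j ∈ C, St1.inf' hSt1 (fun a => dist j a) ≤ 3 * OPT1 := by
  intro j hj
  have hsta₂ : dist st a₂ ≤ OPT1 := by
    rw [ha₂, hOPT1]
    exact dist_le_sup'_inf'_of_nearest hC hSne hSsub hst (htopnear st hst)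
  calc St1.inf' hSt1 (fun a => dist j a) ≤ St1.inf' hSt1 (fun a => dist st a) := hfar j hj
    _ ≤ dist st a₁ := inf'_le _ ha₁mem
    _ ≤ 3 * OPT1 := dist_le_three_mul_of_dist_le hsta₂ ha₁c ha₂c

theorem stmt15 {M : Type*} [MetricSpace M] (C A : Finset M) (hC : C.Nonempty)
    -- top j : a nearest candidate to agent j
    (top : M → M) (htopmem : ∀ j ∈ C, top j ∈ A)
    (htopnear : ∀ j ∈ C, ∀ a ∈ A, dist j (top j) ≤ dist j a)
    -- S* : an optimal k-center solution (a subset of candidates) of radius OPT₁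
    (Sstar : Finset M) (hSsub : Sstar ⊆ A) (hSne : Sstar.Nonempty)
    (OPT1 : ℝ) (hOPT1 : OPT1 = C.sup' hC (fun j => Sstar.inf' hSne (fun a => dist j a)))
    -- s_t ∈ C is the selected agent, with a₂ = top(s_t)
    (st : M) (hst : st ∈ C) (a₁ a₂ : M) (ha₁A : a₁ ∈ A) (ha₂ : a₂ = top st)
    -- a₁ and a₂ belong to the same optimal cluster, with center c ∈ S*
    (c : M) (hc : c ∈ Sstar) (ha₁c : dist a₁ c ≤ OPT1) (ha₂c : dist a₂ c ≤ OPT1)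
    -- a₁ was already opened: a₁ ∈ S_{t-1}
    (St1 : Finset M) (hSt1 : St1.Nonempty) (ha₁mem : a₁ ∈ St1)
    -- farthest-point rule: s_t is an agent farthest from the open centers
    (hfar : ∀ j ∈ C, St1.inf' hSt1 (fun a => dist j a) ≤
      St1.inf' hSt1 (fun a => dist st a)) :
    ∀ j ∈ C, St1.inf' hSt1 (fun a => dist j a) ≤ 3 * OPT1 :=
  stmt15_general C A hC top htopnear Sstar hSsub hSne OPT1 hOPT1 st hst a₁ a₂ ha₂ c ha₁c ha₂c St1
    hSt1 ha₁mem hfar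
end

section
/- Let (C,d) be a finite metric space, S̄ ⊆ C a center set with Top_ℓ(d(C,S̄)) ≤ β·OPT where OPT = min_{|T|≤k, T⊆C} Top_ℓ(d(C,T)). Let OPT_{C×S̄} denote the minimum of Top_ℓ(d(C,T)) over nonempty T ⊆ S̄ with |T| ≤ k. Then OPT_{C×S̄} ≤ 2·OPT + Top_ℓ(d(C,S̄)) ≤ (2 + β)·OPT. -/
open Finset

/-! Snapping each optimal center `a` to its nearest point `π a` of `S̄` costs little: for a client
`j` served by `a`, `d(j, π a) ≤ d(j, a) + d(a, π a) ≤ d(j, a) + d(a, a'') ≤ 2 d(j, a) + d(j, a'')`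
where `a''` is the point of `S̄` nearest to `j`. Since `Top_ℓ` is monotone and subadditive,
the snapped center set, which lies in `S̄` and has at most `k` points, costs at most
`2 OPT + Top_ℓ(d(C, S̄))`. -/

section Topl

variable {ι : Type*} [Fintype ι]

lemma sum_le_topl {ℓ : ℕ} (v : ι → ℝ) {S : Finset ι} (hS : S.card = ℓ) :
    ∑ i ∈ S, v i ≤ Topl ℓ v := by
  refine le_csSup ?_ ⟨S, hS, rfl⟩
  refine ((Set.finite_range fun S : Finset ι => ∑ i ∈ S, v i).subset ?_).bddAbove
  rintro x ⟨S, -, rfl⟩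
  exact ⟨S, rfl⟩

lemma topl_le {ℓ : ℕ} (hℓ : ℓ ≤ Fintype.card ι) (v : ι → ℝ) {b : ℝ}
    (h : ∀ S : Finset ι, S.card = ℓ → ∑ i ∈ S, v i ≤ b) : Topl ℓ v ≤ b := by
  obtain ⟨S₀, -, hS₀⟩ := exists_subset_card_eq (s := (univ : Finset ι)) (by simpa using hℓ)
  exact csSup_le ⟨_, S₀, hS₀, rfl⟩ (by rintro x ⟨S, hS, rfl⟩; exact h S hS)

lemma topl_le_mul_add {ℓ : ℕ} (hℓ : ℓ ≤ Fintype.card ι) {c : ℝ} (hc : 0 ≤ c)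
    {t u w : ι → ℝ} (h : ∀ i, t i ≤ c * u i + w i) :
    Topl ℓ t ≤ c * Topl ℓ u + Topl ℓ w := by
  refine topl_le hℓ t fun S hS => ?_
  calc ∑ i ∈ S, t i ≤ ∑ i ∈ S, (c * u i + w i) := sum_le_sum fun i _ => h i
    _ = c * ∑ i ∈ S, u i + ∑ i ∈ S, w i := by rw [sum_add_distrib, mul_sum]
    _ ≤ c * Topl ℓ u + Topl ℓ w :=
      add_le_add (mul_le_mul_of_nonneg_left (sum_le_topl u hS) hc) (sum_le_topl w hS)

end Topl

section NearestPoint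

variable {X : Type*} [PseudoMetricSpace X]

noncomputable def nearestPoint (S : Finset X) (hS : S.Nonempty) (x : X) : X :=
  (S.exists_mem_eq_inf' hS (dist x)).choose

lemma nearestPoint_mem (S : Finset X) (hS : S.Nonempty) (x : X) : nearestPoint S hS x ∈ S :=
  (S.exists_mem_eq_inf' hS (dist x)).choose_spec.1

lemma dist_nearestPoint (S : Finset X) (hS : S.Nonempty) (x : X) :
    dist x (nearestPoint S hS x) = S.inf' hS (dist x) :=
  (S.exists_mem_eq_inf' hS (dist x)).choose_spec.2.symm

lemma dist_nearestPoint_le (S : Finset X) (hS : S.Nonempty) (x : X) {y : X} (hy : y ∈ S) :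
    dist x (nearestPoint S hS x) ≤ dist x y :=
  dist_nearestPoint S hS x ▸ inf'_le _ hy

lemma inf'_dist_image_nearestPoint_le [DecidableEq X] {T S : Finset X} (hT : T.Nonempty)
    (hS : S.Nonempty) (j : X) :
    (T.image (nearestPoint S hS)).inf' (hT.image _) (dist j) ≤
      2 * T.inf' hT (dist j) + S.inf' hS (dist j) := by
  set a := nearestPoint T hT j
  set a'' := nearestPoint S hS j
  calc (T.image (nearestPoint S hS)).inf' (hT.image _) (dist j)
      ≤ dist j (nearestPoint S hS a) := inf'_le _ (mem_image_of_mem _ (nearestPoint_mem T hT j))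
    _ ≤ dist j a + dist a (nearestPoint S hS a) := dist_triangle _ _ _
    _ ≤ dist j a + dist a a'' := by
      gcongr; exact dist_nearestPoint_le S hS a (nearestPoint_mem S hS j)
    _ ≤ dist j a + (dist a j + dist j a'') := by gcongr; exact dist_triangle _ _ _
    _ = 2 * dist j a + dist j a'' := by rw [dist_comm a j]; ring
    _ = 2 * T.inf' hT (dist j) + S.inf' hS (dist j) := by
      rw [dist_nearestPoint, dist_nearestPoint]

end NearestPoint

lemma Set.finite_of_forall_eq_apply_nonempty {α β : Type*} [Finite α] {s : Set β}
    (f : (T : Finset α) → T.Nonempty → β) (h : ∀ x ∈ s, ∃ T hT, x = f T hT) : s.Finite := by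
  refine (Set.finite_range fun T : {T : Finset α // T.Nonempty} => f T.1 T.2).subset ?_
  intro x hx
  obtain ⟨T, hT, rfl⟩ := h x hx
  exact ⟨⟨T, hT⟩, rfl⟩

theorem stmt18_general {C : Type*} [Fintype C] [MetricSpace C] (k ℓ : ℕ)
    (hk : 1 ≤ k) (hℓn : ℓ ≤ Fintype.card C) (β : ℝ)
    (Sbar : Finset C) (hSbar : Sbar.Nonempty)
    (OPT : ℝ)
    (hOPT : OPT = sInf {x : ℝ | ∃ (T : Finset C) (hT : T.Nonempty),
      T.card ≤ k ∧ x = Topl ℓ (fun j => T.inf' hT (fun a => dist j a))})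
    (hSbarcost : Topl ℓ (fun j => Sbar.inf' hSbar (fun a => dist j a)) ≤ β * OPT)
    -- OPT_{C×S̄} : optimum over center sets contained in S̄
    (OPTcs : ℝ)
    (hOPTcs : OPTcs = sInf {x : ℝ | ∃ (T : Finset C) (hT : T.Nonempty),
      T ⊆ Sbar ∧ T.card ≤ k ∧
      x = Topl ℓ (fun j => T.inf' hT (fun a => dist j a))}) :
    OPTcs ≤ 2 * OPT + Topl ℓ (fun j => Sbar.inf' hSbar (fun a => dist j a)) ∧
      2 * OPT + Topl ℓ (fun j => Sbar.inf' hSbar (fun a => dist j a)) ≤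
        (2 + β) * OPT := by
  classical
  refine ⟨?_, by linarith⟩
  obtain ⟨c, -⟩ := id hSbar
  have hOPT_mem : OPT ∈ {x : ℝ | ∃ (T : Finset C) (hT : T.Nonempty),
      T.card ≤ k ∧ x = Topl ℓ (fun j => T.inf' hT (fun a => dist j a))} :=
    hOPT ▸ Set.Nonempty.csInf_mem ⟨_, {c}, singleton_nonempty c, by simpa using hk, rfl⟩
      (Set.finite_of_forall_eq_apply_nonempty _ (by rintro _ ⟨T, hT, -, hx⟩; exact ⟨T, hT, hx⟩))
  obtain ⟨T, hT, hTk, rfl⟩ := hOPT_mem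
  set π := nearestPoint Sbar hSbar
  have hπT_sub : T.image π ⊆ Sbar := image_subset_iff.2 fun a _ => nearestPoint_mem _ _ a
  rw [hOPTcs]
  refine le_trans (csInf_le ?_ ⟨_, hT.image π, hπT_sub, card_image_le.trans hTk, rfl⟩) ?_
  · exact (Set.finite_of_forall_eq_apply_nonempty _
      (by rintro _ ⟨T, hT, -, -, hx⟩; exact ⟨T, hT, hx⟩)).bddBelow
  · exact topl_le_mul_add hℓn zero_le_two (inf'_dist_image_nearestPoint_le hT hSbar)

theorem stmt18 {C : Type*} [Fintype C] [MetricSpace C] (k ℓ : ℕ)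
    (hk : 1 ≤ k) (hℓ1 : 1 ≤ ℓ) (hℓn : ℓ ≤ Fintype.card C) (β : ℝ)
    (Sbar : Finset C) (hSbar : Sbar.Nonempty)
    (OPT : ℝ)
    (hOPT : OPT = sInf {x : ℝ | ∃ (T : Finset C) (hT : T.Nonempty),
      T.card ≤ k ∧ x = Topl ℓ (fun j => T.inf' hT (fun a => dist j a))})
    (hSbarcost : Topl ℓ (fun j => Sbar.inf' hSbar (fun a => dist j a)) ≤ β * OPT)
    -- OPT_{C×S̄} : optimum over center sets contained in S̄
    (OPTcs : ℝ)
    (hOPTcs : OPTcs = sInf {x : ℝ | ∃ (T : Finset C) (hT : T.Nonempty),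
      T ⊆ Sbar ∧ T.card ≤ k ∧
      x = Topl ℓ (fun j => T.inf' hT (fun a => dist j a))}) :
    OPTcs ≤ 2 * OPT + Topl ℓ (fun j => Sbar.inf' hSbar (fun a => dist j a)) ∧
      2 * OPT + Topl ℓ (fun j => Sbar.inf' hSbar (fun a => dist j a)) ≤
        (2 + β) * OPT :=
  stmt18_general k ℓ hk hℓn β Sbar hSbar OPT hOPT hSbarcost OPTcs hOPTcs
end
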